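/- Let L₁ = ℤ⁴, L₉ = {(a,b,c,d) ∈ ℤ⁴ : a+b+d and a+c+d are both even}, and P(x) = b²c² + 18abcd − 4ac³ − 4b³d − 27a²d². Then L₉ is the disjoint union of 2L₁ = {(a,b,c,d) : all coordinates even} and {x ∈ ℤ⁴ : P(x) ≡ 5 (mod 8)}. -/
import Mathlib

/-- Discriminant of an integral binary cubic form. -/
def discZ (x : ℤ × ℤ × ℤ × ℤ) : ℤ :=
  match x with
  | (a, b, c, d) =>
    b ^ 2 * c ^ 2 + 18 * a * b * c * d - 4 * a * c ^ 3 - 4 * b ^ 3 * d - 27 * a ^ 2 * d ^ 2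

def L₁double : Set (ℤ × ℤ × ℤ × ℤ) :=
  {x | Even x.1 ∧ Even x.2.1 ∧ Even x.2.2.1 ∧ Even x.2.2.2}

def L₉ : Set (ℤ × ℤ × ℤ × ℤ) :=
  {x | Even (x.1 + x.2.1 + x.2.2.2) ∧ Even (x.1 + x.2.2.1 + x.2.2.2)}

private def f2 : ZMod 8 →+* ZMod 2 := ZMod.castHom (show (2:ℕ) ∣ 8 by norm_num) (ZMod 2)

private lemma key : ∀ A B C D : ZMod 8,
    ((f2 A + f2 B + f2 D = 0 ∧ f2 A + f2 C + f2 D = 0) ↔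
      ((f2 A = 0 ∧ f2 B = 0 ∧ f2 C = 0 ∧ f2 D = 0) ∨
        B ^ 2 * C ^ 2 + 18 * A * B * C * D - 4 * A * C ^ 3 - 4 * B ^ 3 * D
          - 27 * A ^ 2 * D ^ 2 = 5)) ∧
    ¬((f2 A = 0 ∧ f2 B = 0 ∧ f2 C = 0 ∧ f2 D = 0) ∧
        B ^ 2 * C ^ 2 + 18 * A * B * C * D - 4 * A * C ^ 3 - 4 * B ^ 3 * D
          - 27 * A ^ 2 * D ^ 2 = 5) := by decide

private lemma evenIff (a : ℤ) : Even a ↔ ((a : ZMod 2) = 0) := by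
  rw [even_iff_two_dvd, ZMod.intCast_zmod_eq_zero_iff_dvd]; norm_num

theorem stmt5 :
    L₉ = L₁double ∪ {x | discZ x ≡ 5 [ZMOD 8]} ∧
      L₁double ∩ {x | discZ x ≡ 5 [ZMOD 8]} = ∅ := by
  have modIff : ∀ a : ℤ, a ≡ 5 [ZMOD 8] ↔ ((a : ZMod 8) = 5) := by
    intro a
    rw [show ((5 : ZMod 8) = ((5 : ℤ) : ZMod 8)) by norm_num,
      ZMod.intCast_eq_intCast_iff]
    norm_num [Int.ModEq]
  constructor
  · ext ⟨a, b, c, d⟩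
    simp only [L₉, L₁double, discZ, Set.mem_union, Set.mem_setOf_eq, evenIff, modIff]
    have h := (key (a : ZMod 8) (b : ZMod 8) (c : ZMod 8) (d : ZMod 8)).1
    simp only [map_intCast] at h
    push_cast at h ⊢
    exact h
  · ext ⟨a, b, c, d⟩
    simp only [L₁double, discZ, Set.mem_inter_iff, Set.mem_setOf_eq, evenIff, modIff,
      Set.mem_empty_iff_false, iff_false, not_and]
    intro h1 hd
    have h := (key (a : ZMod 8) (b : ZMod 8) (c : ZMod 8) (d : ZMod 8)).2
    simp only [map_intCast] at h
    push_cast at h hd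
    exact h ⟨h1, hd⟩
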